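/- Let d ≥ 1, ε ∈ ℝ, γ ∈ ℝ, U : ℝ^d → ℝ, and let ρ, S : ℝ × ℝ^d → ℝ with ρ(t,x) > 0 everywhere, both ρ and S continuously differentiable in t and twice continuously differentiable in x. Suppose that at every (t,x): (i) ∂_t ρ = −∇·(ρ ∇S) + ε Δρ, and (ii) ∂_t S = −½‖∇S‖² − ε ΔS + U − γ S (damped Hamilton–Jacobi–Bellman equation). Then the Hopf–Cole transform Ŝ := S − ε·log ρ satisfies, at every (t,x), ∂_t Ŝ = −½‖∇Ŝ‖² − ½ε²‖∇(log ∘ ρ)‖² − ε² Δ(log ∘ ρ) + U − γ Ŝ − ε γ log ρ. -/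

import Mathlib

/-! Write `L = log ρ`. Since `∇·(ρ∇S) = ρΔS + ⟪∇ρ, ∇S⟫` and `Δρ/ρ = ΔL + ‖∇L‖²`, the
Fokker–Planck equation divided by `ρ` reads `∂ₜL = -ΔS - ⟪∇L, ∇S⟫ + ε (ΔL + ‖∇L‖²)`.
Subtracting `ε` times this from the HJB equation, the `εΔS` terms cancel, the gradient terms
complete the square `‖∇S - ε∇L‖²`, and the damping term splits as `-γS = -γŜ - εγL`. -/

open MeasureTheory
open scoped RealInnerProductSpace BigOperators

/-- Gradient of a scalar function on Euclidean space. -/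
noncomputable def egrad {d : ℕ} (f : EuclideanSpace ℝ (Fin d) → ℝ)
    (x : EuclideanSpace ℝ (Fin d)) : EuclideanSpace ℝ (Fin d) :=
  gradient f x

/-- Laplacian `Δf = ∑ i, ∂²f/∂x_i²`. -/
noncomputable def elap {d : ℕ} (f : EuclideanSpace ℝ (Fin d) → ℝ)
    (x : EuclideanSpace ℝ (Fin d)) : ℝ :=
  ∑ i, fderiv ℝ (fun y => fderiv ℝ f y (EuclideanSpace.single i (1 : ℝ))) x
      (EuclideanSpace.single i (1 : ℝ))

/-- Divergence `∇·V = ∑ i, ∂V_i/∂x_i` of a vector field. -/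
noncomputable def ediv {d : ℕ} (V : EuclideanSpace ℝ (Fin d) → EuclideanSpace ℝ (Fin d))
    (x : EuclideanSpace ℝ (Fin d)) : ℝ :=
  ∑ i, fderiv ℝ (fun y => V y i) x (EuclideanSpace.single i (1 : ℝ))

section
variable {d : ℕ}

lemma egrad_apply (f : EuclideanSpace ℝ (Fin d) → ℝ) (x : EuclideanSpace ℝ (Fin d)) (i : Fin d) :
    egrad f x i = fderiv ℝ f x (EuclideanSpace.single i 1) := by
  have h := EuclideanSpace.inner_single_left i (1 : ℝ) (egrad f x)
  rw [RCLike.conj_to_real, one_mul] at h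
  rw [← h, egrad, real_inner_comm, inner_gradient_left]

lemma ediv_egrad (f : EuclideanSpace ℝ (Fin d) → ℝ) (x : EuclideanSpace ℝ (Fin d)) :
    ediv (egrad f) x = elap f x := by
  simp only [ediv, elap, egrad_apply]

lemma ContDiff.differentiable_egrad {f : EuclideanSpace ℝ (Fin d) → ℝ} (hf : ContDiff ℝ 2 f) :
    Differentiable ℝ (egrad f) := by
  have : ContDiff ℝ 1 (fderiv ℝ f) := hf.fderiv_right (m := 1) le_rfl
  exact ((InnerProductSpace.toDual ℝ _).symm.toContinuousLinearEquiv.contDiff.comp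
    this).differentiable one_ne_zero

lemma egrad_sub_const_mul {f g : EuclideanSpace ℝ (Fin d) → ℝ} {x : EuclideanSpace ℝ (Fin d)}
    (hf : DifferentiableAt ℝ f x) (hg : DifferentiableAt ℝ g x) (c : ℝ) :
    egrad (fun z => f z - c * g z) x = egrad f x - c • egrad g x := by
  simp only [egrad, gradient, fderiv_fun_sub hf (hg.const_mul c), fderiv_const_mul hg, map_sub,
    map_smul]

lemma egrad_log {f : EuclideanSpace ℝ (Fin d) → ℝ} {x : EuclideanSpace ℝ (Fin d)}
    (hf : DifferentiableAt ℝ f x) (hx : f x ≠ 0) :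
    egrad (fun z => Real.log (f z)) x = (f x)⁻¹ • egrad f x := by
  simp only [egrad, gradient, fderiv.log hf hx, map_smul]

lemma ediv_smul {f : EuclideanSpace ℝ (Fin d) → ℝ}
    {V : EuclideanSpace ℝ (Fin d) → EuclideanSpace ℝ (Fin d)} {x : EuclideanSpace ℝ (Fin d)}
    (hf : DifferentiableAt ℝ f x) (hV : DifferentiableAt ℝ V x) :
    ediv (fun y => f y • V y) x = f x * ediv V x + ⟪egrad f x, V x⟫ := by
  have hVi := (differentiableAt_piLp 2).1 hV
  simp only [ediv, PiLp.smul_apply, smul_eq_mul, PiLp.inner_apply, egrad_apply,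
    fderiv_fun_mul hf (hVi _), add_apply, smul_apply, Real.inner_apply,
    Finset.sum_add_distrib, Finset.mul_sum, mul_comm (V x _)]

lemma fderiv_fderiv_log_apply {f : EuclideanSpace ℝ (Fin d) → ℝ} (hf : ContDiff ℝ 2 f)
    (hne : ∀ z, f z ≠ 0) (x w : EuclideanSpace ℝ (Fin d)) :
    fderiv ℝ (fun y => fderiv ℝ (fun z => Real.log (f z)) y w) x w
      = (f x)⁻¹ * fderiv ℝ (fun y => fderiv ℝ f y w) x w - ((f x)⁻¹ * fderiv ℝ f x w) ^ 2 := by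
  have hfd : Differentiable ℝ f := hf.differentiable two_ne_zero
  have hf' : Differentiable ℝ (fun y => fderiv ℝ f y w) :=
    ((hf.fderiv_right (m := 1) le_rfl).clm_apply contDiff_const).differentiable one_ne_zero
  have hlog : (fun y => fderiv ℝ (fun z => Real.log (f z)) y w)
      = fun y => (f y)⁻¹ * fderiv ℝ f y w :=
    funext fun y => by simp [fderiv.log (hfd y) (hne y)]
  have hinv : HasFDerivAt (fun y => (f y)⁻¹) (-((f x) ^ 2)⁻¹ • fderiv ℝ f x) x :=
    (hasDerivAt_inv (hne x)).comp_hasFDerivAt x (hfd x).hasFDerivAt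
  rw [hlog, (hinv.fun_mul (hf' x).hasFDerivAt).fderiv]
  simp only [add_apply, smul_apply, smul_eq_mul]
  ring

lemma elap_log {f : EuclideanSpace ℝ (Fin d) → ℝ} (hf : ContDiff ℝ 2 f) (hne : ∀ z, f z ≠ 0)
    (x : EuclideanSpace ℝ (Fin d)) :
    elap (fun z => Real.log (f z)) x
      = (f x)⁻¹ * elap f x - ‖egrad (fun z => Real.log (f z)) x‖ ^ 2 := by
  have hfd : DifferentiableAt ℝ f x := hf.differentiable two_ne_zero x
  simp only [elap, fderiv_fderiv_log_apply hf hne, EuclideanSpace.norm_sq_eq, egrad_apply,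
    fderiv.log hfd (hne x), Finset.sum_sub_distrib, Finset.mul_sum, smul_apply, smul_eq_mul,
    Real.norm_eq_abs, sq_abs]

end

theorem hopf_cole_damped_hjb_general {d : ℕ} (ε γ : ℝ)
    (U : EuclideanSpace ℝ (Fin d) → ℝ)
    (ρ S : ℝ → EuclideanSpace ℝ (Fin d) → ℝ)
    (hpos : ∀ t x, 0 < ρ t x)
    (hρt : ∀ x, ContDiff ℝ 1 (fun t => ρ t x))
    (hρx : ∀ t, ContDiff ℝ 2 (ρ t))
    (hSt : ∀ x, ContDiff ℝ 1 (fun t => S t x))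
    (hSx : ∀ t, ContDiff ℝ 2 (S t))
    (hFP : ∀ t x, deriv (fun s => ρ s x) t
      = -ediv (fun y => ρ t y • egrad (S t) y) x + ε * elap (ρ t) x)
    (hHJB : ∀ t x, deriv (fun s => S s x) t
      = -(1/2) * ‖egrad (S t) x‖ ^ 2 - ε * elap (S t) x + U x - γ * S t x) :
    ∀ t x, deriv (fun s => S s x - ε * Real.log (ρ s x)) t
      = -(1/2) * ‖egrad (fun z => S t z - ε * Real.log (ρ t z)) x‖ ^ 2
        - (1/2) * ε ^ 2 * ‖egrad (fun z => Real.log (ρ t z)) x‖ ^ 2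
        - ε ^ 2 * elap (fun z => Real.log (ρ t z)) x + U x
        - γ * (S t x - ε * Real.log (ρ t x))
        - ε * γ * Real.log (ρ t x) := by
  intro t x
  have hne : ∀ z, ρ t z ≠ 0 := fun z => (hpos t z).ne'
  have hρd : DifferentiableAt ℝ (ρ t) x := (hρx t).differentiable two_ne_zero x
  have hSd : DifferentiableAt ℝ (S t) x := (hSx t).differentiable two_ne_zero x
  have htime : deriv (fun s => S s x - ε * Real.log (ρ s x)) t
      = deriv (fun s => S s x) t - ε * (deriv (fun s => ρ s x) t / ρ t x) := by
    have hρ' := ((hρt x).differentiable one_ne_zero t).hasDerivAt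
    have hS' := ((hSt x).differentiable one_ne_zero t).hasDerivAt
    exact (hS'.sub ((hρ'.log (hne x)).const_mul ε)).deriv
  rw [htime, hHJB, hFP, ediv_smul hρd ((hSx t).differentiable_egrad x), ediv_egrad,
    egrad_sub_const_mul hSd (hρd.log (hne x)), elap_log (hρx t) hne, egrad_log hρd (hne x),
    norm_sub_sq_real, inner_smul_right, inner_smul_right, real_inner_comm]
  simp only [norm_smul, mul_pow, Real.norm_eq_abs, sq_abs]
  field_simp [hne x]
  ring

/-- Hopf–Cole transform of the damped (contact) Hamilton–Jacobi–Bellman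
equation.  If `ρ` solves Fokker–Planck and `S` solves
`∂ₜS = -½‖∇S‖² - εΔS + U - γS`, then `Ŝ = S - ε log ρ` solves
`∂ₜŜ = -½‖∇Ŝ‖² - ½ε²‖∇log ρ‖² - ε²Δ(log ρ) + U - γŜ - εγ log ρ`. -/
theorem hopf_cole_damped_hjb {d : ℕ} (hd : 1 ≤ d) (ε γ : ℝ)
    (U : EuclideanSpace ℝ (Fin d) → ℝ)
    (ρ S : ℝ → EuclideanSpace ℝ (Fin d) → ℝ)
    (hpos : ∀ t x, 0 < ρ t x)
    (hρt : ∀ x, ContDiff ℝ 1 (fun t => ρ t x))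
    (hρx : ∀ t, ContDiff ℝ 2 (ρ t))
    (hSt : ∀ x, ContDiff ℝ 1 (fun t => S t x))
    (hSx : ∀ t, ContDiff ℝ 2 (S t))
    (hFP : ∀ t x, deriv (fun s => ρ s x) t
      = -ediv (fun y => ρ t y • egrad (S t) y) x + ε * elap (ρ t) x)
    (hHJB : ∀ t x, deriv (fun s => S s x) t
      = -(1/2) * ‖egrad (S t) x‖ ^ 2 - ε * elap (S t) x + U x - γ * S t x) :
    ∀ t x, deriv (fun s => S s x - ε * Real.log (ρ s x)) t
      = -(1/2) * ‖egrad (fun z => S t z - ε * Real.log (ρ t z)) x‖ ^ 2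
        - (1/2) * ε ^ 2 * ‖egrad (fun z => Real.log (ρ t z)) x‖ ^ 2
        - ε ^ 2 * elap (fun z => Real.log (ρ t z)) x + U x
        - γ * (S t x - ε * Real.log (ρ t x))
        - ε * γ * Real.log (ρ t x) :=
  hopf_cole_damped_hjb_general ε γ U ρ S hpos hρt hρx hSt hSx hFP hHJB
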